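/- arXiv:1405.0472 — 4 statements merged into one kernel-verified Lean document; each statement's English description precedes it below -/
import Mathlib

section
/- Let A be a commutative Noetherian ring with unity, let 𝔞 be an ideal in A[x₁,…,xₙ], and fix a monomial order. Let T be the set of terms a·x^α (a ∈ A nonzero) such that a·x^α does not belong to the leading term ideal ⟨Lt(𝔞)⟩. Then the residue classes T + 𝔞 generate the quotient A[x₁,…,xₙ]/𝔞 as an A-module. -/
open MvPolynomial

/-- The leading monomial (multidegree) of a polynomial with respect to a monomial order. -/
noncomputable def mDeg {A : Type*} [CommRing A] {n : ℕ} (m : MonomialOrder (Fin n))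
    (f : MvPolynomial (Fin n) A) : Fin n →₀ ℕ :=
  m.toSyn.symm (f.support.sup m.toSyn)

/-- The leading coefficient of a polynomial with respect to a monomial order. -/
noncomputable def mLC {A : Type*} [CommRing A] {n : ℕ} (m : MonomialOrder (Fin n))
    (f : MvPolynomial (Fin n) A) : A :=
  f.coeff (mDeg m f)

/-- The leading term `Lt(f) = Lc(f)·Lm(f)` of a polynomial. -/
noncomputable def leadTerm {A : Type*} [CommRing A] {n : ℕ} (m : MonomialOrder (Fin n))
    (f : MvPolynomial (Fin n) A) : MvPolynomial (Fin n) A :=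
  monomial (mDeg m f) (mLC m f)

/-- The leading term ideal `⟨Lt(𝔞)⟩` of an ideal. -/
noncomputable def leadTermIdeal {A : Type*} [CommRing A] {n : ℕ} (m : MonomialOrder (Fin n))
    (𝔞 : Ideal (MvPolynomial (Fin n) A)) : Ideal (MvPolynomial (Fin n) A) :=
  Ideal.span {p | ∃ f ∈ 𝔞, f ≠ 0 ∧ p = leadTerm m f}

/-!
Induction on the leading monomial: `f` is congruent, modulo the span of the standard terms, to
`f - g` for some `g` with the same leading term, namely `g = Lt(f)` when `Lt(f)` is a standard
term and `g ∈ 𝔞` otherwise. The existence of that `g ∈ 𝔞` is the one real point: the polynomials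
whose coefficient at every `α` is the `α`-coefficient of an element of `𝔞` of degree `≼ α` form
an ideal (the condition is monotone in `α` under divisibility), and this ideal contains every
`Lt(f)`, `f ∈ 𝔞`, hence all of `⟨Lt(𝔞)⟩`.
-/

open scoped MonomialOrder

namespace MvPolynomial

variable {σ R : Type*} [CommSemiring R]

def idealOfCoeffs (I : (σ →₀ ℕ) → Ideal R) (hI : Monotone I) : Ideal (MvPolynomial σ R) where
  carrier := {p | ∀ α, p.coeff α ∈ I α}
  add_mem' hp hq α := by
    rw [coeff_add]
    exact add_mem (hp α) (hq α)
  zero_mem' α := by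
    rw [coeff_zero]
    exact zero_mem _
  smul_mem' q p hp α := by
    classical
    rw [smul_eq_mul, coeff_mul]
    refine Ideal.sum_mem _ fun γδ hγδ => Ideal.mul_mem_left _ _ (hI ?_ (hp γδ.2))
    rw [← Finset.HasAntidiagonal.mem_antidiagonal.mp hγδ]
    exact le_add_self

end MvPolynomial

namespace MonomialOrder

open MvPolynomial

variable {σ R : Type*} (m : MonomialOrder σ)

section CommSemiring

variable [CommSemiring R]

/-- `0` together with the leading coefficients of the elements of `𝔞` of degree exactly `α`. -/
def leadCoeffIdeal (𝔞 : Ideal (MvPolynomial σ R)) (α : σ →₀ ℕ) : Ideal R where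
  carrier := {a | ∃ g ∈ 𝔞, m.degree g ≼[m] α ∧ g.coeff α = a}
  add_mem' := by
    rintro _ _ ⟨g, hg, hgα, rfl⟩ ⟨h, hh, hhα, rfl⟩
    refine ⟨g + h, add_mem hg hh, m.degree_add_le.trans (sup_le hgα hhα), coeff_add _ _ _⟩
  zero_mem' := ⟨0, zero_mem _, by simp [degree_zero], coeff_zero _⟩
  smul_mem' c := by
    rintro _ ⟨g, hg, hgα, rfl⟩
    exact ⟨c • g, Submodule.smul_of_tower_mem 𝔞 c hg, m.degree_smul_le.trans hgα, coeff_smul _ _ _⟩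

variable {m}

theorem mem_leadCoeffIdeal {𝔞 : Ideal (MvPolynomial σ R)} {α : σ →₀ ℕ} {a : R} :
    a ∈ m.leadCoeffIdeal 𝔞 α ↔ ∃ g ∈ 𝔞, m.degree g ≼[m] α ∧ g.coeff α = a :=
  Iff.rfl

/-- Multiplying a witness by `x^γ` moves it from degree `δ` to degree `δ + γ`. -/
theorem leadCoeffIdeal_mono (𝔞 : Ideal (MvPolynomial σ R)) : Monotone (m.leadCoeffIdeal 𝔞) := by
  intro δ α hδα a ⟨g, hg, hgδ, hga⟩
  obtain ⟨γ, rfl⟩ := exists_add_of_le hδα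
  refine ⟨monomial γ 1 * g, 𝔞.mul_mem_left _ hg, ?_, ?_⟩
  · calc m.toSyn (m.degree (monomial γ 1 * g))
          ≤ m.toSyn (m.degree (monomial γ (1 : R))) + m.toSyn (m.degree g) := by
            rw [← map_add]; exact m.degree_mul_le
      _ ≤ m.toSyn γ + m.toSyn δ := add_le_add (m.degree_monomial_le 1) hgδ
      _ = m.toSyn (δ + γ) := by rw [← map_add, add_comm]
  · rw [add_comm, coeff_monomial_mul, one_mul, hga]

theorem leadingTerm_mem_idealOfCoeffs {𝔞 : Ideal (MvPolynomial σ R)} {f : MvPolynomial σ R}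
    (hf : f ∈ 𝔞) : m.leadingTerm f ∈ idealOfCoeffs _ (leadCoeffIdeal_mono (m := m) 𝔞) := by
  classical
  intro α
  rw [leadingTerm, coeff_monomial]
  split_ifs with hα
  · subst hα
    exact ⟨f, hf, le_rfl, rfl⟩
  · exact zero_mem _

end CommSemiring

section CommRing

variable [CommRing R] {m}

theorem degree_sub_lt_of_coeff_degree_eq {f g : MvPolynomial σ R} (hfg : f - g ≠ 0)
    (hg : m.degree g ≼[m] m.degree f) (hc : g.coeff (m.degree f) = m.leadingCoeff f) :
    m.degree (f - g) ≺[m] m.degree f := by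
  refine lt_of_le_of_ne (m.degree_sub_le.trans (sup_le le_rfl hg)) fun h => hfg ?_
  rw [← m.leadingCoeff_eq_zero_iff, leadingCoeff, m.toSyn.injective h, coeff_sub, hc,
    leadingCoeff, sub_self]

end CommRing

end MonomialOrder

section LeadTermIdeal

open MonomialOrder

variable {A : Type*} [CommRing A] {n : ℕ} {m : MonomialOrder (Fin n)}
  {𝔞 : Ideal (MvPolynomial (Fin n) A)}

theorem leadTermIdeal_le_idealOfCoeffs :
    leadTermIdeal m 𝔞 ≤ idealOfCoeffs _ (leadCoeffIdeal_mono (m := m) 𝔞) := by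
  refine Ideal.span_le.mpr ?_
  -- `leadTerm m f` unfolds to `m.leadingTerm f`, as `mDeg m` is `m.degree`.
  rintro _ ⟨f, hf, -, rfl⟩
  exact leadingTerm_mem_idealOfCoeffs hf

theorem exists_coeff_eq_of_monomial_mem_leadTermIdeal {α : Fin n →₀ ℕ} {a : A}
    (h : monomial α a ∈ leadTermIdeal m 𝔞) :
    ∃ g ∈ 𝔞, m.degree g ≼[m] α ∧ g.coeff α = a := by
  simpa using mem_leadCoeffIdeal.mp (leadTermIdeal_le_idealOfCoeffs h α)

def standardTerms (m : MonomialOrder (Fin n)) (𝔞 : Ideal (MvPolynomial (Fin n) A)) :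
    Set (MvPolynomial (Fin n) A) :=
  {q | ∃ (a : A) (α : Fin n →₀ ℕ), a ≠ 0 ∧ q = monomial α a ∧ q ∉ leadTermIdeal m 𝔞}

/-- Take `g ∈ 𝔞` if `Lt(f) ∈ ⟨Lt(𝔞)⟩`, and `g = Lt(f)` otherwise. -/
theorem exists_mk_mem_span_standardTerms {f : MvPolynomial (Fin n) A} (hf : f ≠ 0) :
    ∃ g, Ideal.Quotient.mk 𝔞 g ∈ Submodule.span A (Ideal.Quotient.mk 𝔞 '' standardTerms m 𝔞) ∧
      m.degree g ≼[m] m.degree f ∧ g.coeff (m.degree f) = m.leadingCoeff f := by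
  by_cases hlt : m.leadingTerm f ∈ leadTermIdeal m 𝔞
  · obtain ⟨g, hg, hdeg, hc⟩ := exists_coeff_eq_of_monomial_mem_leadTermIdeal hlt
    refine ⟨g, ?_, hdeg, hc⟩
    rw [Ideal.Quotient.eq_zero_iff_mem.mpr hg]
    exact zero_mem _
  · refine ⟨m.leadingTerm f, Submodule.subset_span ⟨_, ?_, rfl⟩,
      (congrArg m.toSyn (m.degree_leadingTerm f)).le, by simp [leadingTerm]⟩
    exact ⟨m.leadingCoeff f, m.degree f, m.leadingCoeff_ne_zero_iff.mpr hf, rfl, hlt⟩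

theorem mk_mem_span_standardTerms (f : MvPolynomial (Fin n) A) :
    Ideal.Quotient.mk 𝔞 f ∈ Submodule.span A (Ideal.Quotient.mk 𝔞 '' standardTerms m 𝔞) := by
  induction hd : m.toSyn (m.degree f) using WellFoundedLT.induction generalizing f with
  | ind d ih =>
    by_cases hf : f = 0
    · rw [hf, map_zero]
      exact zero_mem _
    obtain ⟨g, hgS, hdeg, hc⟩ := exists_mk_mem_span_standardTerms (𝔞 := 𝔞) hf
    rw [← add_sub_cancel g f, map_add]
    refine add_mem hgS ?_
    by_cases hfg : f - g = 0
    · rw [hfg, map_zero]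
      exact zero_mem _
    exact ih _ (hd ▸ degree_sub_lt_of_coeff_degree_eq hfg hdeg hc) _ rfl

end LeadTermIdeal

theorem terms_outside_leadTermIdeal_generate_quotient_general
    {A : Type*} [CommRing A] {n : ℕ}
    (m : MonomialOrder (Fin n)) (𝔞 : Ideal (MvPolynomial (Fin n) A)) :
    Submodule.span A
      (Ideal.Quotient.mk 𝔞 ''
        {q | ∃ (a : A) (α : Fin n →₀ ℕ), a ≠ 0 ∧ q = monomial α a ∧
              q ∉ leadTermIdeal m 𝔞}) = ⊤ := by
  refine eq_top_iff.mpr fun x _ => ?_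
  obtain ⟨f, rfl⟩ := Ideal.Quotient.mk_surjective x
  exact mk_mem_span_standardTerms f

/-- The residue classes of the terms `a·x^α` not lying in the leading term ideal of `𝔞`
generate `A[x₁,…,xₙ]/𝔞` as an `A`-module. -/
theorem terms_outside_leadTermIdeal_generate_quotient
    {A : Type*} [CommRing A] [IsNoetherianRing A] {n : ℕ}
    (m : MonomialOrder (Fin n)) (𝔞 : Ideal (MvPolynomial (Fin n) A)) :
    Submodule.span A
      (Ideal.Quotient.mk 𝔞 ''
        {q | ∃ (a : A) (α : Fin n →₀ ℕ), a ≠ 0 ∧ q = monomial α a ∧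
              q ∉ leadTermIdeal m 𝔞}) = ⊤ :=
  terms_outside_leadTermIdeal_generate_quotient_general m 𝔞
end

section
/- Let A = 2ℤ (the rng of even integers, without unity) and let 𝔞 = ⟨2x, 2y⟩ ⊆ (2ℤ)[x,y]. Then the quotient (2ℤ)[x,y]/𝔞 is not a free (2ℤ)-module; in particular the element 0 + 𝔞 has more than one representation, e.g. 0 + 𝔞 = 2·(6x + 𝔞). -/
/-!
The class `u` of `2x²` is a nonzero element with `2u = 0`. Indeed `2·2x² = (2x)(2x) ∈ 𝔞`, whereas
every element of `𝔞` has `x²`-coefficient divisible by `4`: the elements with that property form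
an ideal of `(2ℤ)[x,y]`, because products of even polynomials have all coefficients divisible by
`4`, and it contains `2x` and `2y`. With unique representations by even coefficients, a
representation `c` of `u` yields the representation `2c` of `2u = 0`, so `2c = 0` and `u = 0`.
-/

open MvPolynomial

/-- The non-unital commutative ring `(2ℤ)[x,y]`, realized as the non-unital subring of
`ℤ[x,y]` consisting of polynomials with all coefficients even. -/
noncomputable def evenPolys : NonUnitalSubring (MvPolynomial (Fin 2) ℤ) where
  carrier := {q | ∃ p : MvPolynomial (Fin 2) ℤ, q = 2 * p}
  zero_mem' := ⟨0, by ring⟩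
  add_mem' := by rintro a b ⟨p, rfl⟩ ⟨q, rfl⟩; exact ⟨p + q, by ring⟩
  neg_mem' := by rintro a ⟨p, rfl⟩; exact ⟨-p, by ring⟩
  mul_mem' := by rintro a b ⟨p, rfl⟩ ⟨q, rfl⟩; exact ⟨2 * (p * q), by ring⟩

/-- The two-sided ideal `𝔞 = ⟨2x, 2y⟩` of `(2ℤ)[x,y]`. -/
noncomputable def aIdeal : TwoSidedIdeal evenPolys :=
  TwoSidedIdeal.span {⟨2 * X 0, ⟨X 0, rfl⟩⟩, ⟨2 * X 1, ⟨X 1, rfl⟩⟩}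

/-- The quotient rng `(2ℤ)[x,y]/𝔞`. -/
noncomputable def Qrng : Type := aIdeal.ringCon.Quotient

noncomputable instance : NonUnitalRing Qrng :=
  inferInstanceAs (NonUnitalRing aIdeal.ringCon.Quotient)

theorem eq_zero_of_zsmul_eq_zero_of_existsUnique_even_repr {ι M : Type*} [AddCommGroup M]
    (b : ι → M)
    (h : ∀ q : M, ∃! c : ι →₀ ℤ, (∀ i, Even (c i)) ∧ q = c.sum fun i z => z • b i)
    {n : ℤ} (hn : n ≠ 0) {u : M} (hu : n • u = 0) : u = 0 := by
  obtain ⟨c, ⟨hc, rfl⟩, -⟩ := h u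
  simp only [← Finsupp.linearCombination_apply] at hu ⊢
  have hnc : n • c = 0 := (h 0).unique
    ⟨fun i => (hc i).mul_left n, by rw [← Finsupp.linearCombination_apply, map_smul, hu]⟩
    ⟨by simp, by simp⟩
  rw [(smul_eq_zero.mp hnc).resolve_left hn, map_zero]

namespace evenPolys

noncomputable def double (p : MvPolynomial (Fin 2) ℤ) : evenPolys := ⟨2 * p, p, rfl⟩

theorem coeff_double (m : Fin 2 →₀ ℕ) (p : MvPolynomial (Fin 2) ℤ) :
    coeff m (double p : MvPolynomial (Fin 2) ℤ) = 2 * coeff m p := by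
  rw [← coeff_C_mul, map_ofNat]
  rfl

theorem two_zsmul_double_mul (p q : MvPolynomial (Fin 2) ℤ) :
    (2 : ℤ) • double (p * q) = double p * double q :=
  Subtype.ext (by simp only [double, AddSubgroupClass.coe_zsmul, NonUnitalSubring.val_mul]; ring)

theorem four_dvd_coeff_mul (m : Fin 2 →₀ ℕ) (q r : evenPolys) :
    4 ∣ coeff m ((q * r : evenPolys) : MvPolynomial (Fin 2) ℤ) := by
  obtain ⟨_, p, rfl⟩ := q
  obtain ⟨_, s, rfl⟩ := r
  refine ⟨coeff m (p * s), ?_⟩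
  rw [NonUnitalSubring.val_mul, ← coeff_C_mul, map_ofNat]
  ring_nf

noncomputable def coeffFourDvdIdeal (m : Fin 2 →₀ ℕ) : TwoSidedIdeal evenPolys :=
  TwoSidedIdeal.mk' {q | 4 ∣ coeff m (q : MvPolynomial (Fin 2) ℤ)} (by simp)
    (fun {_ _} hq hr => by
      simpa only [Set.mem_ofPred_eq, NonUnitalSubring.val_add, coeff_add] using dvd_add hq hr)
    (fun {_} hq => by
      simpa only [Set.mem_ofPred_eq, NonUnitalSubring.val_neg, coeff_neg] using hq.neg_right)
    (fun _ => four_dvd_coeff_mul m _ _) (fun _ => four_dvd_coeff_mul m _ _)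

theorem mem_coeffFourDvdIdeal {m : Fin 2 →₀ ℕ} {q : evenPolys} :
    q ∈ coeffFourDvdIdeal m ↔ 4 ∣ coeff m (q : MvPolynomial (Fin 2) ℤ) :=
  TwoSidedIdeal.mem_mk' _ _ _ _ _ _ q

theorem double_X_mem_coeffFourDvdIdeal {m : Fin 2 →₀ ℕ} {i : Fin 2}
    (hm : m ≠ Finsupp.single i 1) : double (X i) ∈ coeffFourDvdIdeal m := by
  simp [mem_coeffFourDvdIdeal, coeff_double, coeff_X, Ne.symm hm]

theorem aIdeal_le_coeffFourDvdIdeal {m : Fin 2 →₀ ℕ} (h₀ : m ≠ Finsupp.single 0 1)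
    (h₁ : m ≠ Finsupp.single 1 1) : aIdeal ≤ coeffFourDvdIdeal m := by
  refine TwoSidedIdeal.span_le.mpr ?_
  rintro _ (rfl | rfl)
  exacts [double_X_mem_coeffFourDvdIdeal h₀, double_X_mem_coeffFourDvdIdeal h₁]

theorem double_X_mem_aIdeal (i : Fin 2) : double (X i) ∈ aIdeal := by
  fin_cases i <;> exact TwoSidedIdeal.subset_span (by simp [double])

theorem double_X_sq_not_mem_aIdeal : double (X 0 ^ 2) ∉ aIdeal := by
  intro h
  have h4 := mem_coeffFourDvdIdeal.mp (aIdeal_le_coeffFourDvdIdeal (m := Finsupp.single 0 2)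
    ((Finsupp.single_injective 0).ne (by decide)) (by simp [Finsupp.single_eq_single_iff]) h)
  simp [coeff_double, coeff_X_pow] at h4

end evenPolys

namespace Qrng

theorem mk_eq_zero_iff (q : evenPolys) :
    (aIdeal.ringCon.toQuotient q : Qrng) = 0 ↔ q ∈ aIdeal :=
  aIdeal.ringCon.eq

theorem zsmul_mk (n : ℤ) (q : evenPolys) :
    n • (aIdeal.ringCon.toQuotient q : Qrng) = aIdeal.ringCon.toQuotient (n • q) :=
  (aIdeal.ringCon.coe_zsmul n q).symm

theorem mk_double_X_sq_ne_zero :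
    (aIdeal.ringCon.toQuotient (evenPolys.double (X 0 ^ 2)) : Qrng) ≠ 0 :=
  (mk_eq_zero_iff _).not.mpr evenPolys.double_X_sq_not_mem_aIdeal

theorem two_zsmul_mk_double_X_sq :
    (2 : ℤ) • (aIdeal.ringCon.toQuotient (evenPolys.double (X 0 ^ 2)) : Qrng) = 0 := by
  rw [zsmul_mk, mk_eq_zero_iff, sq, evenPolys.two_zsmul_double_mul]
  exact aIdeal.mul_mem_left _ _ (evenPolys.double_X_mem_aIdeal 0)

end Qrng

/-- The quotient `(2ℤ)[x,y]/⟨2x,2y⟩` is not free as a `2ℤ`-module (no family of elements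
gives unique representations by linear combinations with even integer coefficients); in
particular the zero class has more than one representation, e.g. `0 + 𝔞 = 2·(6x + 𝔞)`. -/
theorem evenPolys_quotient_not_free :
    (¬ ∃ (ι : Type) (b : ι → Qrng), ∀ q : Qrng, ∃! c : ι →₀ ℤ,
        (∀ i, Even (c i)) ∧ q = c.sum fun i z => z • b i) ∧
    (2 : ℤ) • (aIdeal.ringCon.toQuotient ⟨6 * X 0, ⟨3 * X 0, by ring⟩⟩ : Qrng) = 0 := by
  refine ⟨fun ⟨_, b, h⟩ => Qrng.mk_double_X_sq_ne_zero ?_, ?_⟩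
  · exact eq_zero_of_zsmul_eq_zero_of_existsUnique_even_repr b h two_ne_zero
      Qrng.two_zsmul_mk_double_X_sq
  · have h12x : (2 : ℤ) • (⟨6 * X 0, ⟨3 * X 0, by ring⟩⟩ : evenPolys)
        = (6 : ℤ) • evenPolys.double (X 0) :=
      Subtype.ext (by simp only [evenPolys.double, AddSubgroupClass.coe_zsmul]; ring)
    rw [Qrng.zsmul_mk, Qrng.mk_eq_zero_iff, h12x]
    exact aIdeal.zsmul_mem 6 (evenPolys.double_X_mem_aIdeal 0)
end

section
/- Let A be a commutative Noetherian ring with unity and 𝔞 ⊆ A[x₁,…,xₙ] a nonzero ideal with Gröbner basis G with respect to a monomial order. If every element of G has leading coefficient 1 (G is monic), then A[x₁,…,xₙ]/𝔞 is a free A-module with basis given by the residue classes of monomials x^α not divisible by any Lm(g) for g ∈ G. -/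
/-! The quotient map, restricted to the polynomials supported on the standard exponents (those
not above any `Lm(g)`), is an isomorphism of `A`-modules onto `A[x]/𝔞`. It is onto because
division by `G`, possible since the leading coefficients are units, leaves a remainder supported
on standard exponents. It is one-to-one because the leading term of a nonzero `p ∈ 𝔞` lies in
`⟨Lt(G)⟩ = ⟨x^Lm(g) : g ∈ G⟩`, a monomial ideal, so `Lm(p)` lies above some `Lm(g)`. -/

open MvPolynomial

theorem MvPolynomial.coe_basisRestrictSupport {σ R : Type*} [CommRing R] (s : Set (σ →₀ ℕ))
    (i : s) :
    (basisRestrictSupport R s i : MvPolynomial σ R) = monomial i 1 := by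
  classical
  have hi : monomial (i : σ →₀ ℕ) (1 : R) ∈ restrictSupport R s := by simp
  suffices basisRestrictSupport R s i = ⟨_, hi⟩ from congrArg Subtype.val this
  rw [Module.Basis.apply_eq_iff]
  ext j
  change (monomial (i : σ →₀ ℕ) (1 : R)).coeff j = Finsupp.single i 1 j
  simp only [coeff_monomial, Finsupp.single_apply, Subtype.val_inj]

namespace MonomialOrder
variable {σ R : Type*} [CommRing R] {m : MonomialOrder σ} {G : Set (MvPolynomial σ R)}
  {𝔞 : Ideal (MvPolynomial σ R)}

variable (m G) in
def standardExponents : Set (σ →₀ ℕ) := {c | ∀ g ∈ G, ¬ m.degree g ≤ c}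

theorem exists_sub_mem_restrictSupport (hG : G ⊆ 𝔞) (hunit : ∀ g ∈ G, IsUnit (m.leadingCoeff g))
    (f : MvPolynomial σ R) :
    ∃ r ∈ restrictSupport R (m.standardExponents G), f - r ∈ 𝔞 := by
  obtain ⟨q, r, rfl, -, hr⟩ := m.div_set hunit f
  refine ⟨r, hr, ?_⟩
  rw [add_sub_cancel_right]
  exact Ideal.span_le.2 hG ((Finsupp.mem_span_iff_linearCombination _ _ _).2 ⟨q, rfl⟩)

theorem eq_zero_of_mem_restrictSupport
    (hdiv : ∀ p ∈ 𝔞, p ≠ 0 → ∃ g ∈ G, m.degree g ≤ m.degree p) {p : MvPolynomial σ R}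
    (hp𝔞 : p ∈ 𝔞) (hp : p ∈ restrictSupport R (m.standardExponents G)) : p = 0 := by
  by_contra hp0
  obtain ⟨g, hg, hle⟩ := hdiv p hp𝔞 hp0
  exact hp ((m.degree_mem_support_iff p).2 hp0) g hg hle

theorem bijective_quotientMk_restrictSupport (hG : G ⊆ 𝔞)
    (hunit : ∀ g ∈ G, IsUnit (m.leadingCoeff g))
    (hdiv : ∀ p ∈ 𝔞, p ≠ 0 → ∃ g ∈ G, m.degree g ≤ m.degree p) :
    Function.Bijective ((Ideal.Quotient.mkₐ R 𝔞).toLinearMap ∘ₗ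
      (restrictSupport R (m.standardExponents G)).subtype) := by
  refine ⟨(injective_iff_map_eq_zero _).2 fun p hp => ?_, fun x => ?_⟩
  · exact Subtype.ext <|
      eq_zero_of_mem_restrictSupport hdiv (Ideal.Quotient.eq_zero_iff_mem.1 hp) p.2
  · obtain ⟨f, rfl⟩ := Ideal.Quotient.mk_surjective x
    obtain ⟨r, hr, hfr⟩ := exists_sub_mem_restrictSupport (m := m) hG hunit f
    exact ⟨⟨r, hr⟩, (Ideal.Quotient.eq.2 hfr).symm⟩

variable (m G 𝔞) in
noncomputable def quotientBasis (hG : G ⊆ 𝔞)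
    (hunit : ∀ g ∈ G, IsUnit (m.leadingCoeff g))
    (hdiv : ∀ p ∈ 𝔞, p ≠ 0 → ∃ g ∈ G, m.degree g ≤ m.degree p) :
    Module.Basis (m.standardExponents G) R (MvPolynomial σ R ⧸ 𝔞) :=
  (basisRestrictSupport R _).map
    (.ofBijective _ (bijective_quotientMk_restrictSupport hG hunit hdiv))

theorem quotientBasis_apply (hG : G ⊆ 𝔞)
    (hunit : ∀ g ∈ G, IsUnit (m.leadingCoeff g))
    (hdiv : ∀ p ∈ 𝔞, p ≠ 0 → ∃ g ∈ G, m.degree g ≤ m.degree p)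
    (c : m.standardExponents G) :
    quotientBasis m G 𝔞 hG hunit hdiv c = Ideal.Quotient.mk 𝔞 (monomial c 1) := by
  rw [quotientBasis, Module.Basis.map_apply, LinearEquiv.ofBijective_apply, LinearMap.comp_apply,
    Submodule.subtype_apply, coe_basisRestrictSupport, AlgHom.toLinearMap_apply,
    Ideal.Quotient.mkₐ_eq_mk]

end MonomialOrder

section LeadTerm

variable {A : Type*} [CommRing A] {n : ℕ} {m : MonomialOrder (Fin n)}

theorem mDeg_eq_degree (f : MvPolynomial (Fin n) A) : mDeg m f = m.degree f := rfl

theorem mLC_eq_leadingCoeff (f : MvPolynomial (Fin n) A) : mLC m f = m.leadingCoeff f := rfl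

theorem span_leadTerm_eq_span_monomial_degree {G : Finset (MvPolynomial (Fin n) A)}
    (hmonic : ∀ g ∈ G, mLC m g = 1) :
    Ideal.span {p | ∃ g ∈ G, p = leadTerm m g} =
      Ideal.span ((monomial · (1 : A)) '' (m.degree '' (G : Set (MvPolynomial (Fin n) A)))) := by
  congr 1
  ext p
  simp only [Set.image_image, Set.mem_image, Finset.mem_coe]
  refine exists_congr fun g => and_congr_right fun hg => ?_
  rw [leadTerm, hmonic g hg, mDeg_eq_degree, eq_comm]

theorem exists_degree_le_of_mem {𝔞 : Ideal (MvPolynomial (Fin n) A)}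
    {G : Finset (MvPolynomial (Fin n) A)}
    (hGB : Ideal.span {p | ∃ g ∈ G, p = leadTerm m g} = leadTermIdeal m 𝔞)
    (hmonic : ∀ g ∈ G, mLC m g = 1) {p : MvPolynomial (Fin n) A} (hp : p ∈ 𝔞) (hp0 : p ≠ 0) :
    ∃ g ∈ (G : Set (MvPolynomial (Fin n) A)), m.degree g ≤ m.degree p := by
  have hlead : leadTerm m p ∈
      Ideal.span ((monomial · (1 : A)) '' (m.degree '' (G : Set (MvPolynomial (Fin n) A)))) := by
    rw [← span_leadTerm_eq_span_monomial_degree hmonic, hGB]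
    exact Ideal.subset_span ⟨p, hp, hp0, rfl⟩
  have hsupp : m.degree p ∈ (leadTerm m p).support := by
    rw [leadTerm, mDeg_eq_degree, mLC_eq_leadingCoeff, mem_support_iff, coeff_monomial,
      if_pos rfl]
    exact m.leadingCoeff_ne_zero_iff.2 hp0
  obtain ⟨_, ⟨g, hg, rfl⟩, hle⟩ := mem_ideal_span_monomial_image.1 hlead _ hsupp
  exact ⟨g, hg, hle⟩

end LeadTerm

theorem monic_groebner_basis_free_quotient_general
    {A : Type*} [CommRing A] {n : ℕ}
    (m : MonomialOrder (Fin n)) (𝔞 : Ideal (MvPolynomial (Fin n) A))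
    (G : Finset (MvPolynomial (Fin n) A)) (hGsub : ↑G ⊆ (𝔞 : Set (MvPolynomial (Fin n) A)))
    (hGB : Ideal.span {p | ∃ g ∈ G, p = leadTerm m g} = leadTermIdeal m 𝔞)
    (hmonic : ∀ g ∈ G, mLC m g = 1) :
    ∃ B : Module.Basis {α : Fin n →₀ ℕ // ∀ g ∈ G, ¬ mDeg m g ≤ α} A
        (MvPolynomial (Fin n) A ⧸ 𝔞),
      ∀ s, B s = Ideal.Quotient.mk 𝔞 (monomial s.1 1) := by
  have hunit : ∀ g ∈ (G : Set (MvPolynomial (Fin n) A)), IsUnit (m.leadingCoeff g) := by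
    intro g hg
    rw [← mLC_eq_leadingCoeff, hmonic g hg]
    exact isUnit_one
  have hdiv (p) (hp : p ∈ 𝔞) (hp0 : p ≠ 0) :=
    exists_degree_le_of_mem hGB hmonic hp hp0
  exact ⟨m.quotientBasis G 𝔞 hGsub hunit hdiv, fun s => m.quotientBasis_apply hGsub hunit hdiv s⟩

/-- **Macaulay–Buchberger basis theorem over rings (free case).**
If `G` is a monic Gröbner basis of a nonzero ideal `𝔞 ⊆ A[x₁,…,xₙ]` over a commutative
Noetherian ring `A`, then `A[x₁,…,xₙ]/𝔞` is a free `A`-module with basis the residue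
classes of the monomials `x^α` not divisible by any `Lm(g)`, `g ∈ G`. -/
theorem monic_groebner_basis_free_quotient
    {A : Type*} [CommRing A] [IsNoetherianRing A] {n : ℕ}
    (m : MonomialOrder (Fin n)) (𝔞 : Ideal (MvPolynomial (Fin n) A)) (hne : 𝔞 ≠ ⊥)
    (G : Finset (MvPolynomial (Fin n) A)) (hGsub : ↑G ⊆ (𝔞 : Set (MvPolynomial (Fin n) A)))
    (hG0 : (0 : MvPolynomial (Fin n) A) ∉ G)
    (hGB : Ideal.span {p | ∃ g ∈ G, p = leadTerm m g} = leadTermIdeal m 𝔞)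
    (hmonic : ∀ g ∈ G, mLC m g = 1) :
    ∃ B : Module.Basis {α : Fin n →₀ ℕ // ∀ g ∈ G, ¬ mDeg m g ≤ α} A
        (MvPolynomial (Fin n) A ⧸ 𝔞),
      ∀ s, B s = Ideal.Quotient.mk 𝔞 (monomial s.1 1) :=
  monic_groebner_basis_free_quotient_general m 𝔞 G hGsub hGB hmonic
end

section
/- Let A be a commutative Noetherian ring, 𝔞 ⊆ A[x₁,…,xₙ] an ideal such that A[x₁,…,xₙ]/𝔞 is a finitely generated A-module, 𝒪 an order ideal, and G = {g₁,…,g_s} ⊆ 𝔞 an acyclic 𝒪-border basis of 𝔞. Then 𝔞 = ⟨g₁,…,g_s⟩, i.e., G generates the ideal 𝔞. -/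
open MvPolynomial

/-! Every `f` splits as `f = g + r` with `g ∈ ⟨G⟩ ⊆ 𝔞` and `r` a normal form `Σⱼ aⱼ x^{α j}`.
Dividing `0` shows that some normal form lies in `⟨G⟩`; by uniqueness of representatives it is
the only normal form in `𝔞`. So for `f ∈ 𝔞` the remainder `r = f - g ∈ 𝔞` is that normal form,
whence `f ∈ ⟨G⟩`. -/

theorem Submodule.eq_of_le_of_forall_exists_add {R M : Type*} [Ring R] [AddCommGroup M]
    [Module R M] {N P : Submodule R M} {S : Set M} (hNP : N ≤ P)
    (hcover : ∀ x, ∃ y ∈ N, ∃ z ∈ S, x = y + z) (hS : (S ∩ P).Subsingleton) : N = P := by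
  refine le_antisymm hNP fun x hx => ?_
  obtain ⟨y₀, hy₀, z₀, hz₀, h₀⟩ := hcover 0
  obtain ⟨y, hy, z, hz, rfl⟩ := hcover x
  have hz₀_eq : z₀ = -y₀ := by rw [eq_neg_iff_add_eq_zero, add_comm, h₀]
  have hz_mem : z ∈ P := by simpa using P.sub_mem hx (hNP hy)
  have hz_eq : z = z₀ := hS ⟨hz, hz_mem⟩ ⟨hz₀, hz₀_eq ▸ P.neg_mem (hNP hy₀)⟩
  rw [hz_eq, hz₀_eq]
  exact N.add_mem hy (N.neg_mem hy₀)

theorem borderBasis_generates_ideal_general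
    {A : Type*} [CommRing A] {n : ℕ}
    (𝔞 : Ideal (MvPolynomial (Fin n) A))
    (k : ℕ) (α : Fin k → (Fin n →₀ ℕ)) (C : Fin k → Set A)
    (huniq : ∀ f : MvPolynomial (Fin n) A, ∃! c : Fin k → A,
      (∀ j, c j ∈ C j) ∧ f - ∑ j, monomial (α j) (c j) ∈ 𝔞)
    (s : ℕ) (G : Fin s → MvPolynomial (Fin n) A)
    (hG : ∀ i, G i ∈ 𝔞)
    (hdiv : ∀ f : MvPolynomial (Fin n) A,
      ∃ (q : Fin s → MvPolynomial (Fin n) A) (a : Fin k → A),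
        (∀ j, a j ∈ C j) ∧ f = ∑ i, q i * G i + ∑ j, monomial (α j) (a j)) :
    Ideal.span (Set.range G) = 𝔞 := by
  let normalForms : Set (MvPolynomial (Fin n) A) :=
    {r | ∃ a : Fin k → A, (∀ j, a j ∈ C j) ∧ r = ∑ j, monomial (α j) (a j)}
  refine Submodule.eq_of_le_of_forall_exists_add (S := normalForms)
    (Ideal.span_le.2 (Set.range_subset_iff.2 hG)) (fun f => ?_) ?_
  · obtain ⟨q, a, ha, rfl⟩ := hdiv f
    exact ⟨_, (Submodule.mem_span_range_iff_exists_fun _).2 ⟨q, rfl⟩, _, ⟨a, ha, rfl⟩, rfl⟩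
  · rintro _ ⟨⟨a, ha, rfl⟩, ha𝔞⟩ _ ⟨⟨b, hb, rfl⟩, hb𝔞⟩
    rw [(huniq 0).unique ⟨ha, by simpa using 𝔞.neg_mem ha𝔞⟩
      ⟨hb, by simpa using 𝔞.neg_mem hb𝔞⟩]

/-- **An acyclic border basis generates the ideal.**
Let `𝔞 ⊆ A[x₁,…,xₙ]` be an ideal with finitely generated quotient, `𝒪` an order ideal
with monomial part `{x^{α 0},…,x^{α (k-1)}}` and coset representatives `C j` forming a
weak⁺ basis of the quotient (unique representation), and let `G = {g₀,…,g_{s-1}} ⊆ 𝔞` be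
an acyclic `𝒪`-border basis; acyclicity guarantees that the border division algorithm
terminates, i.e. every `f` has a representation `f = Σ fᵢ gᵢ + Σⱼ aⱼ x^{α j}` with
`aⱼ ∈ C j`. Then `𝔞 = ⟨g₀,…,g_{s-1}⟩`. -/
theorem borderBasis_generates_ideal
    {A : Type*} [CommRing A] [IsNoetherianRing A] {n : ℕ}
    (𝔞 : Ideal (MvPolynomial (Fin n) A))
    (hfg : Module.Finite A (MvPolynomial (Fin n) A ⧸ 𝔞))
    (ℐ : (Fin n →₀ ℕ) → Ideal A)
    (hmono : ∀ β γ : Fin n →₀ ℕ, β ≤ γ → ℐ β ≤ ℐ γ)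
    (k : ℕ) (α : Fin k → (Fin n →₀ ℕ)) (C : Fin k → Set A)
    (huniq : ∀ f : MvPolynomial (Fin n) A, ∃! c : Fin k → A,
      (∀ j, c j ∈ C j) ∧ f - ∑ j, monomial (α j) (c j) ∈ 𝔞)
    (s : ℕ) (G : Fin s → MvPolynomial (Fin n) A)
    (hG : ∀ i, G i ∈ 𝔞)
    (hdiv : ∀ f : MvPolynomial (Fin n) A,
      ∃ (q : Fin s → MvPolynomial (Fin n) A) (a : Fin k → A),
        (∀ j, a j ∈ C j) ∧ f = ∑ i, q i * G i + ∑ j, monomial (α j) (a j)) :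
    Ideal.span (Set.range G) = 𝔞 :=
  borderBasis_generates_ideal_general 𝔞 k α C huniq s G hG hdiv
end
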